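/- arXiv:1910.12656 — 2 statements merged into one kernel-verified Lean document; each statement's English description precedes it below -/
import Mathlib

section
/- Every calibration map in the linear Dirichlet parametrisation μ_{DirLin}(q; W, b) = σ(W ln q + b) can be represented in the canonical parametrisation: there exist a matrix A ∈ [0,∞)^{k×k} whose every column contains at least one zero entry, and a vector c in the probability simplex, such that σ(W ln q + b) = σ(A ln(q/(1/k)) + ln c) for all q in the interior of the probability simplex. Specifically one may take a_{ij} = w_{ij} − min_{i'} w_{i'j} and c = σ(W ln u + b) where u = (1/k,…,1/k). -/
/-!
Softmax is invariant under adding the same constant to every logit. Subtracting the column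
minima `m` from `W` changes `W *ᵥ x` by the constant `m ⬝ᵥ x` in every coordinate, and recentring
the input at the uniform vector `u` moves `W *ᵥ u + b` into the bias, where it may be replaced by
`log (softmax (W *ᵥ u + b))`, which differs from it by the constant log-normaliser.
-/

noncomputable def softmax {k : ℕ} (z : Fin k → ℝ) : Fin k → ℝ :=
  fun i => Real.exp (z i) / ∑ j, Real.exp (z j)

open Matrix

section Softmax

variable {k : ℕ}

theorem softmax_add_const (z : Fin k → ℝ) (t : ℝ) :
    softmax (z + Function.const _ t) = softmax z := by
  funext i
  simp only [softmax, Pi.add_apply, Function.const_apply, Real.exp_add, ← Finset.sum_mul]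
  exact mul_div_mul_right _ _ (Real.exp_ne_zero t)

theorem softmax_pos (z : Fin k → ℝ) (i : Fin k) : 0 < softmax z i :=
  div_pos (Real.exp_pos _) (Finset.sum_pos (fun j _ => Real.exp_pos (z j)) ⟨i, Finset.mem_univ i⟩)

theorem sum_softmax [NeZero k] (z : Fin k → ℝ) : ∑ i, softmax z i = 1 := by
  simp only [softmax, ← Finset.sum_div]
  exact div_self (Finset.sum_pos (fun j _ => Real.exp_pos (z j)) Finset.univ_nonempty).ne'

theorem log_softmax (z : Fin k → ℝ) (i : Fin k) :
    Real.log (softmax z i) = z i - Real.log (∑ j, Real.exp (z j)) := by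
  have hS : ∑ j, Real.exp (z j) ≠ 0 :=
    (Finset.sum_pos (fun j _ => Real.exp_pos (z j)) ⟨i, Finset.mem_univ i⟩).ne'
  rw [softmax, Real.log_div (Real.exp_ne_zero _) hS, Real.log_exp]

theorem softmax_sub_replicateRow_mulVec_sub {n : Type*} [Fintype n] (W : Matrix (Fin k) n ℝ)
    (m x u : n → ℝ) (b : Fin k → ℝ) :
    softmax ((W - replicateRow (Fin k) m) *ᵥ (x - u) + fun i => Real.log (softmax (W *ᵥ u + b) i))
      = softmax (W *ᵥ x + b) := by
  rw [← softmax_add_const (W *ᵥ x + b)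
    (-(m ⬝ᵥ (x - u)) - Real.log (∑ j, Real.exp ((W *ᵥ u + b) j)))]
  congr 1
  funext i
  simp only [log_softmax, sub_mulVec, mulVec_sub, replicateRow_mulVec_eq_const, Pi.add_apply,
    Pi.sub_apply, Function.const_apply, dotProduct_sub]
  ring

end Softmax

section ColMin

variable {ι n : Type*} [Finite ι]

noncomputable def colMin (W : Matrix ι n ℝ) (j : n) : ℝ := ⨅ i, W i j

theorem colMin_le (W : Matrix ι n ℝ) (i : ι) (j : n) : colMin W j ≤ W i j :=
  ciInf_le (Finite.bddBelow_range _) i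

theorem exists_eq_colMin [Nonempty ι] (W : Matrix ι n ℝ) (j : n) : ∃ i, W i j = colMin W j :=
  exists_eq_ciInf_of_finite

end ColMin

/-- Every linear-parametrisation Dirichlet calibration map can be written in the
canonical parametrisation: `A` is non-negative with a zero in every column and
`c` is a strictly positive vector in the probability simplex. -/
theorem dirLin_to_canonical {k : ℕ} (hk : 0 < k)
    (W : Matrix (Fin k) (Fin k) ℝ) (b : Fin k → ℝ) :
    ∃ (A : Matrix (Fin k) (Fin k) ℝ) (c : Fin k → ℝ),
      (∀ i j, 0 ≤ A i j) ∧
      (∀ j, ∃ i, A i j = 0) ∧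
      (∀ i, 0 < c i) ∧ (∑ i, c i = 1) ∧
      (∀ q : Fin k → ℝ, (∀ i, 0 < q i) → (∑ i, q i = 1) →
        softmax (W.mulVec (fun i => Real.log (q i)) + b) =
        softmax (A.mulVec (fun i => Real.log (q i / (1 / (k : ℝ)))) + fun i => Real.log (c i))) := by
  have : NeZero k := ⟨hk.ne'⟩
  let u : Fin k → ℝ := Function.const _ (Real.log (1 / k))
  refine ⟨W - replicateRow (Fin k) (colMin W), softmax (W *ᵥ u + b),
    fun i j => sub_nonneg.2 (colMin_le W i j), fun j => ?_, softmax_pos _, sum_softmax _,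
    fun q hq _ => ?_⟩
  · obtain ⟨i, hi⟩ := exists_eq_colMin W j
    exact ⟨i, sub_eq_zero.2 hi⟩
  · have hlog : (fun i => Real.log (q i / (1 / (k : ℝ)))) = (fun i => Real.log (q i)) - u := by
      funext i
      exact Real.log_div (hq i).ne' (by positivity)
    rw [hlog, softmax_sub_replicateRow_mulVec_sub]
end

section
/- For k = 2 classes, the linear Dirichlet calibration map restricted to the first coordinate reduces to a beta-calibration-style sigmoid: μ_{DirLin}((p, 1−p); W, b)_1 = 1/(1 + exp(−(a ln p − c ln(1−p) + d))) for suitable real parameters a = w_{11} − w_{21}, c = w_{22} − w_{12}, d = b_1 − b_2, for all p ∈ (0,1). -/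
/-- For two classes, the linear Dirichlet calibration map restricted to the
first coordinate is a beta-calibration-style sigmoid with `a = w₁₁ − w₂₁`,
`c = w₂₂ − w₁₂`, `d = b₁ − b₂`. -/
theorem dirLin_two_classes_beta {W : Matrix (Fin 2) (Fin 2) ℝ} {b : Fin 2 → ℝ}
    (p : ℝ) (hp : 0 < p) (hp1 : p < 1) :
    softmax (W.mulVec (fun i => Real.log (![p, 1 - p] i)) + b) 0 =
      1 / (1 + Real.exp (-((W 0 0 - W 1 0) * Real.log p -
        (W 1 1 - W 0 1) * Real.log (1 - p) + (b 0 - b 1)))) := by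
  have key : ∀ z0 z1 : ℝ, Real.exp z0 / (Real.exp z0 + Real.exp z1)
      = 1 / (1 + Real.exp (z1 - z0)) := by
    intro z0 z1
    rw [Real.exp_sub]; field_simp
  simp only [softmax, Matrix.mulVec, dotProduct, Fin.sum_univ_two, Pi.add_apply,
    Matrix.cons_val_zero, Matrix.cons_val_one, Matrix.head_cons]
  rw [key]
  ring_nf
end
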